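/- arXiv:0704.1091 — 5 statements merged into one kernel-verified Lean document; each statement's English description precedes it below -/
import Mathlib

section
/- Theorem 1 (part 1): Let J be an ideal of A_n and let z be a nonzero element of J with period n_z. Let r_z be the least positive integer such that x^{r_z}·z = α·z in A_n for some α ∈ GF(q)^*. Then, for this α, the multiplicative order d_z of α in GF(q)^* satisfies n_z = r_z · d_z; in particular d_z divides q − 1. -/
open Polynomial

namespace CyclicCode

open scoped Classical

variable (F : Type) [Field F] [Fintype F]

/-- The ambient algebra `A_n = GF(q)[x]/(x^n - 1)`. -/
abbrev An (n : ℕ) := AdjoinRoot (X ^ n - 1 : F[X])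

/-- The image of `x` in `A_n`. -/
noncomputable def xbar (n : ℕ) : An F n := AdjoinRoot.root _

variable {F}

/-- The proportionality class `P_z = {α • z : α ∈ GF(q)^*}` of `z`. -/
def propClass {n : ℕ} (z : An F n) : Set (An F n) :=
  {w | ∃ α : F, α ≠ 0 ∧ w = α • z}

/-- The cycle `{x^j • z : j}` of `z`. -/
noncomputable def cyc {n : ℕ} (z : An F n) : Set (An F n) :=
  {w | ∃ j : ℕ, w = xbar F n ^ j * z}

/-- The period of `z`: the least positive `e` with `x^e * z = z`. -/
noncomputable def period {n : ℕ} (z : An F n) : ℕ :=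
  sInf {e : ℕ | 0 < e ∧ xbar F n ^ e * z = z}

/-- The order of a polynomial `f`: the least positive `e` with `f ∣ X^e - 1`. -/
noncomputable def polyOrder {F : Type} [Field F] (f : F[X]) : ℕ :=
  sInf {e : ℕ | 0 < e ∧ f ∣ X ^ e - 1}

/-- The representative of degree `< n` of an element of `A_n`. -/
noncomputable def rep {n : ℕ} (z : An F n) : F[X] :=
  if h : (X ^ n - 1 : F[X]).Monic then AdjoinRoot.modByMonicHom h z else 0

/-- The Hamming weight of an element of `A_n`. -/
noncomputable def wt {n : ℕ} (z : An F n) : ℕ := (rep z).support.card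

/-- `c` is the minimal polynomial of `z ∈ A_n`: a polynomial annihilates `z`
iff it is a multiple of `c`. -/
def HasMinPoly {n : ℕ} (z : An F n) (c : F[X]) : Prop :=
  ∀ f : F[X], AdjoinRoot.mk (X ^ n - 1 : F[X]) f * z = 0 ↔ c ∣ f

/-- The cyclic code of length `n` with parity-check polynomial `h`:
the ideal of `A_n` generated by `(X^n - 1)/h`. -/
noncomputable def code (F : Type) [Field F] (n : ℕ) (h : F[X]) : Ideal (An F n) :=
  Ideal.span {AdjoinRoot.mk (X ^ n - 1 : F[X]) ((X ^ n - 1) / h)}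

/-- The proportionality classes meeting a set `C`. -/
def classesOf {n : ℕ} (C : Set (An F n)) : Set (Set (An F n)) :=
  {P | ∃ z ∈ C, P = propClass z}

/-- The cycles meeting a set `C`. -/
noncomputable def cyclesOf {n : ℕ} (C : Set (An F n)) : Set (Set (An F n)) :=
  {S | ∃ z ∈ C, S = cyc z}

/-- The minimum Hamming distance of a linear code `J ⊆ A_n`. -/
noncomputable def minDist {n : ℕ} (J : Ideal (An F n)) : ℕ :=
  sInf {k : ℕ | ∃ z ∈ J, z ≠ 0 ∧ wt z = k}

/-- The multiplicative order of `q` modulo `n`. -/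
noncomputable def multOrder (q n : ℕ) : ℕ :=
  sInf {e : ℕ | 0 < e ∧ q ^ e ≡ 1 [MOD n]}


/-- Theorem 1, part 1: if `z ≠ 0` lies in an ideal `J ⊆ A_n`, has
period `n_z`, and `r_z` is the least positive integer with `x^{r_z} * z = α • z`
for some `α ∈ GF(q)^*`, then for this `α` the multiplicative order `d_z` of `α`
satisfies `n_z = r_z * d_z`; in particular `d_z ∣ q - 1`. -/
theorem stmt2 {F : Type} [Field F] [Fintype F] (q n : ℕ)
    (hcard : Fintype.card F = q) (hq : 2 < q) (hn : 0 < n) (hco : Nat.Coprime n q)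
    (J : Ideal (An F n)) (z : An F n) (hzJ : z ∈ J) (hz : z ≠ 0)
    (r : ℕ) (α : F) (hr : 0 < r) (hα : α ≠ 0)
    (heq : xbar F n ^ r * z = α • z)
    (hmin : ∀ e : ℕ, 0 < e → (∃ β : F, β ≠ 0 ∧ xbar F n ^ e * z = β • z) → r ≤ e) :
    period z = r * orderOf α ∧ orderOf α ∣ q - 1 := by
  -- smul cancellation on z
  have hsmul_cancel : ∀ β : F, β • z = 0 → β = 0 := by
    intro β hβ0
    by_contra hβ
    apply hz
    calc z = β⁻¹ • (β • z) := by rw [smul_smul, inv_mul_cancel₀ hβ, one_smul]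
      _ = 0 := by rw [hβ0, smul_zero]
  -- key lemma
  have key : ∀ e : ℕ, 0 < e → ∀ β : F, β ≠ 0 → xbar F n ^ e * z = β • z →
      ∃ k : ℕ, 0 < k ∧ e = r * k ∧ β = α ^ k := by
    intro e
    induction e using Nat.strong_induction_on with
    | _ e ih =>
      intro he β hβ heqβ
      rcases lt_trichotomy e r with hlt | heqr | hgt
      · exact absurd (hmin e he ⟨β, hβ, heqβ⟩) (not_le.mpr hlt)
      · refine ⟨1, one_pos, by omega, ?_⟩
        have h0 : (β - α) • z = 0 := by
          rw [sub_smul, ← heqβ, ← heq, heqr, sub_self]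
        rw [pow_one]
        exact sub_eq_zero.mp (hsmul_cancel _ h0)
      · have he' : 0 < e - r := by omega
        have hstep : xbar F n ^ (e - r) * z = (α⁻¹ * β) • z := by
          have h1 : xbar F n ^ (e - r) * (xbar F n ^ r * z) = xbar F n ^ e * z := by
            rw [← mul_assoc, ← pow_add]
            congr 2
            omega
          rw [heq, mul_smul_comm, heqβ] at h1
          calc xbar F n ^ (e - r) * z
              = α⁻¹ • (α • (xbar F n ^ (e - r) * z)) := by
                rw [smul_smul, inv_mul_cancel₀ hα, one_smul]
            _ = α⁻¹ • (β • z) := by rw [h1]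
            _ = (α⁻¹ * β) • z := by rw [smul_smul]
        obtain ⟨k, hk0, hek, hβk⟩ :=
          ih (e - r) (by omega) he' _ (mul_ne_zero (inv_ne_zero hα) hβ) hstep
        refine ⟨k + 1, by omega, by rw [mul_add, mul_one]; omega, ?_⟩
        have : β = α * (α⁻¹ * β) := by
          rw [← mul_assoc, mul_inv_cancel₀ hα, one_mul]
        rw [this, hβk, pow_succ']
  -- powers: x^{r*k} * z = α^k • z
  have hpow : ∀ k : ℕ, xbar F n ^ (r * k) * z = α ^ k • z := by
    intro k
    induction k with
    | zero => simp
    | succ k ihk =>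
      have : xbar F n ^ (r * (k + 1)) * z
          = xbar F n ^ (r * k) * (xbar F n ^ r * z) := by
        rw [← mul_assoc, ← pow_add, mul_add, mul_one]
      rw [this, heq, mul_smul_comm, ihk, smul_smul, ← pow_succ']
  -- order of α
  have hαq : α ^ (q - 1) = 1 := by
    subst hcard
    exact FiniteField.pow_card_sub_one_eq_one α hα
  have hfin : IsOfFinOrder α := isOfFinOrder_iff_pow_eq_one.mpr ⟨q - 1, by omega, hαq⟩
  have hd0 : 0 < orderOf α := hfin.orderOf_pos
  have hdvd : orderOf α ∣ q - 1 := orderOf_dvd_of_pow_eq_one hαq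
  set d := orderOf α with hd
  -- r * d is in the period set
  have hmem : 0 < r * d ∧ xbar F n ^ (r * d) * z = z := by
    refine ⟨Nat.mul_pos hr hd0, ?_⟩
    rw [hpow d, pow_orderOf_eq_one, one_smul]
  have hperiod_le : period z ≤ r * d := Nat.sInf_le hmem
  have hperiod_mem : 0 < period z ∧ xbar F n ^ (period z) * z = z :=
    Nat.sInf_mem (s := {e : ℕ | 0 < e ∧ xbar F n ^ e * z = z}) ⟨r * d, hmem⟩
  obtain ⟨k, hk0, hpk, h1k⟩ := key (period z) hperiod_mem.1 1 one_ne_zero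
    (by rw [hperiod_mem.2, one_smul])
  have hdk : d ∣ k := orderOf_dvd_of_pow_eq_one h1k.symm
  have : r * d ≤ period z := by
    rw [hpk]
    exact Nat.mul_le_mul_left r (Nat.le_of_dvd hk0 hdk)
  exact ⟨le_antisymm hperiod_le this, hdvd⟩

end CyclicCode
end

section
/- Theorem 1 (part 2): Let J be an ideal of A_n and let z be a nonzero element of J with period n_z. Let r_z be the least positive integer such that x^{r_z}·z = α·z in A_n for some α ∈ GF(q)^*, and let d_z = n_z / r_z. Then the cycle {x^j·z : 0 ≤ j ≤ n_z − 1} of z meets exactly r_z distinct proportionality classes, namely P_z, P_{x·z}, …, P_{x^{r_z−1}·z}, and each of these classes contains exactly d_z elements of the cycle. -/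
open Polynomial

namespace CyclicCode

open scoped Classical

variable (F : Type) [Field F] [Fintype F]

variable {F}

/-!
Writing `e = r * (e / r) + e % r` turns `x ^ e * z` into `α ^ (e / r) • (x ^ (e % r) * z)`, so by
the minimality of `r` the exponents `e` with `x ^ e * z ∈ P_z` are exactly the multiples of `r`,
and `x ^ k * z`, `x ^ l * z` are proportional iff `k ≡ l [MOD r]`. The cycle consists of the
distinct elements `x ^ k * z` with `k` below the period, which is positive since `α ^ (q - 1) = 1`
and is a multiple of `r`; so each residue class mod `r` contributes `period z / r` of them.
-/

/-- The paper's `r_z`, with multiplier `α`: the period of the proportionality class of `z` under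
multiplication by `x`. -/
structure IsProjectivePeriod {K A : Type*} [Field K] [Semiring A] [Algebra K A]
    (x z : A) (r : ℕ) (α : K) : Prop where
  pos : 0 < r
  ne_zero : α ≠ 0
  pow_mul_eq : x ^ r * z = α • z
  le_of_pow_mul_eq_smul : ∀ e, 0 < e → (∃ β : K, β ≠ 0 ∧ x ^ e * z = β • z) → r ≤ e

namespace IsProjectivePeriod

variable {K A : Type*} [Field K] [Semiring A] [Algebra K A] {x z : A} {r : ℕ} {α : K}

theorem pow_mul_mul (h : IsProjectivePeriod x z r α) (m : ℕ) :
    x ^ (r * m) * z = α ^ m • z := by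
  induction m with
  | zero => simp
  | succ m ih =>
    rw [mul_add_one, pow_add, mul_assoc, h.pow_mul_eq, mul_smul_comm, ih, smul_smul, pow_succ']

theorem pow_mul_eq_smul_pow_mod_mul (h : IsProjectivePeriod x z r α) (k : ℕ) :
    x ^ k * z = α ^ (k / r) • (x ^ (k % r) * z) := by
  conv_lhs => rw [← Nat.mod_add_div k r, pow_add, mul_assoc, h.pow_mul_mul, mul_smul_comm]

theorem dvd_of_pow_mul_eq_smul (h : IsProjectivePeriod x z r α) {e : ℕ} {β : K} (hβ : β ≠ 0)
    (he : x ^ e * z = β • z) : r ∣ e := by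
  refine Nat.dvd_of_mod_eq_zero (Nat.eq_zero_of_not_pos fun hpos => ?_)
  have hαe : α ^ (e / r) ≠ 0 := pow_ne_zero _ h.ne_zero
  have hmod : x ^ (e % r) * z = ((α ^ (e / r))⁻¹ * β) • z := by
    rw [mul_smul, ← he, h.pow_mul_eq_smul_pow_mod_mul e, inv_smul_smul₀ hαe]
  exact (Nat.mod_lt e h.pos).not_ge
    (h.le_of_pow_mul_eq_smul _ hpos ⟨_, mul_ne_zero (inv_ne_zero hαe) hβ, hmod⟩)

theorem exists_smul_iff_modEq (h : IsProjectivePeriod x z r α) {k l : ℕ} :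
    (∃ β : K, β ≠ 0 ∧ x ^ k * z = β • (x ^ l * z)) ↔ k ≡ l [MOD r] := by
  constructor
  · rintro ⟨β, hβ, hkl⟩
    have hl : l ≤ r * l := Nat.le_mul_of_pos_left l h.pos
    -- shifting by `r * l - l` turns `x ^ l * z` into `α ^ l • z`
    have hshift : x ^ (k + (r * l - l)) * z = (β * α ^ l) • z := by
      rw [add_comm, pow_add, mul_assoc, hkl, mul_smul_comm, ← mul_assoc, ← pow_add,
        Nat.sub_add_cancel hl, h.pow_mul_mul, smul_smul]
    have hk : k + (r * l - l) ≡ 0 [MOD r] := Nat.modEq_zero_iff_dvd.2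
      (h.dvd_of_pow_mul_eq_smul (mul_ne_zero hβ (pow_ne_zero _ h.ne_zero)) hshift)
    have hl' : l + (r * l - l) ≡ 0 [MOD r] := by
      rw [Nat.add_sub_cancel' hl]
      exact Nat.modEq_zero_iff_dvd.2 (dvd_mul_right r l)
    exact Nat.ModEq.add_right_cancel' _ (hk.trans hl'.symm)
  · intro hkl
    have hαl : α ^ (l / r) ≠ 0 := pow_ne_zero _ h.ne_zero
    refine ⟨α ^ (k / r) * (α ^ (l / r))⁻¹, mul_ne_zero (pow_ne_zero _ h.ne_zero)
      (inv_ne_zero hαl), ?_⟩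
    rw [h.pow_mul_eq_smul_pow_mod_mul k, h.pow_mul_eq_smul_pow_mod_mul l, smul_smul,
      inv_mul_cancel_right₀ hαl, hkl]

theorem period_pos [Fintype K] (h : IsProjectivePeriod x z r α) : 0 < MulAction.period x z :=
  MulAction.period_pos_of_fixed (Nat.mul_pos h.pos (Nat.sub_pos_of_lt Fintype.one_lt_card))
    (by rw [smul_eq_mul, h.pow_mul_mul, FiniteField.pow_card_sub_one_eq_one α h.ne_zero, one_smul])

theorem dvd_period (h : IsProjectivePeriod x z r α) : r ∣ MulAction.period x z :=
  h.dvd_of_pow_mul_eq_smul one_ne_zero (by rw [one_smul, ← smul_eq_mul, MulAction.pow_period_smul])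

end IsProjectivePeriod

section

variable {K : Type} [Field K] {n : ℕ}

theorem period_eq_mulActionPeriod (z : An K n) : period z = MulAction.period (xbar K n) z := by
  rw [MulAction.period_eq_minimalPeriod, Function.minimalPeriod_eq_sInf_n_pos_IsPeriodicPt, period]
  simp_rw [MulAction.isPeriodicPt_smul_iff, smul_eq_mul]

theorem propClass_eq_iff_mem {u v : An K n} : propClass u = propClass v ↔ u ∈ propClass v := by
  refine ⟨fun huv => huv ▸ ⟨1, one_ne_zero, (one_smul K u).symm⟩, ?_⟩
  rintro ⟨β, hβ, rfl⟩
  ext w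
  constructor
  · rintro ⟨γ, hγ, rfl⟩
    exact ⟨γ * β, mul_ne_zero hγ hβ, smul_smul γ β v⟩
  · rintro ⟨γ, hγ, rfl⟩
    exact ⟨γ * β⁻¹, mul_ne_zero hγ (inv_ne_zero hβ), by rw [smul_smul, inv_mul_cancel_right₀ hβ]⟩

namespace IsProjectivePeriod

variable {r : ℕ} {z : An K n} {α : K}

theorem propClass_eq_iff (h : IsProjectivePeriod (xbar K n) z r α) {k l : ℕ} :
    propClass (xbar K n ^ k * z) = propClass (xbar K n ^ l * z) ↔ k ≡ l [MOD r] := by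
  rw [propClass_eq_iff_mem, ← h.exists_smul_iff_modEq]
  rfl

theorem classesOf_cyc (h : IsProjectivePeriod (xbar K n) z r α) :
    classesOf (cyc z) = (propClass <| xbar K n ^ · * z) '' Set.Iio r := by
  ext P
  constructor
  · rintro ⟨_, ⟨k, rfl⟩, rfl⟩
    exact ⟨k % r, Nat.mod_lt k h.pos, h.propClass_eq_iff.2 (Nat.mod_modEq k r)⟩
  · rintro ⟨j, -, rfl⟩
    exact ⟨_, ⟨j, rfl⟩, rfl⟩

theorem ncard_classesOf_cyc (h : IsProjectivePeriod (xbar K n) z r α) :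
    (classesOf (cyc z)).ncard = r := by
  rw [h.classesOf_cyc, Set.InjOn.ncard_image, Set.ncard_Iio_nat]
  exact fun i hi j hj hij => (h.propClass_eq_iff.1 hij).eq_of_lt_of_lt hi hj

theorem propClass_inter_cyc [Fintype K] (h : IsProjectivePeriod (xbar K n) z r α) (j : ℕ) :
    propClass (xbar K n ^ j * z) ∩ cyc z =
      (xbar K n ^ · * z) '' ↑({k ∈ Finset.range (period z) | k ≡ j [MOD r]} : Finset ℕ) := by
  ext w
  simp only [Finset.coe_filter, Finset.mem_range, Set.mem_image, Set.mem_ofPred_eq,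
    Set.mem_inter_iff]
  constructor
  · rintro ⟨hw, m, rfl⟩
    have hmod : xbar K n ^ (m % period z) * z = xbar K n ^ m * z := by
      rw [period_eq_mulActionPeriod, ← smul_eq_mul, MulAction.pow_mod_period_smul, smul_eq_mul]
    refine ⟨m % period z, ⟨Nat.mod_lt m ?_, h.exists_smul_iff_modEq.1 (hmod ▸ hw)⟩, hmod⟩
    exact period_eq_mulActionPeriod z ▸ h.period_pos
  · rintro ⟨k, ⟨-, hkj⟩, rfl⟩
    exact ⟨h.exists_smul_iff_modEq.2 hkj, k, rfl⟩

theorem ncard_propClass_inter_cyc [Fintype K] (h : IsProjectivePeriod (xbar K n) z r α)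
    (j : ℕ) :
    (propClass (xbar K n ^ j * z) ∩ cyc z).ncard = period z / r := by
  have hinj : Set.InjOn (xbar K n ^ · * z) (Set.Iio (period z)) := by
    rw [period_eq_mulActionPeriod, MulAction.period_eq_minimalPeriod]
    simpa [smul_iterate_apply] using
      Function.iterate_injOn_Iio_minimalPeriod (f := (xbar K n * ·)) (x := z)
  have hdvd : period z % r = 0 :=
    Nat.mod_eq_zero_of_dvd (period_eq_mulActionPeriod z ▸ h.dvd_period)
  have hsub :
      ↑({k ∈ Finset.range (period z) | k ≡ j [MOD r]} : Finset ℕ) ⊆ Set.Iio (period z) :=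
    fun k hk => Finset.mem_range.1 (Finset.mem_filter.1 hk).1
  rw [h.propClass_inter_cyc, (hinj.mono hsub).ncard_image, Set.ncard_coe_finset,
    ← Nat.count_eq_card_filter_range, Nat.count_modEq_card _ h.pos, hdvd]
  simp

end IsProjectivePeriod

end

theorem stmt3_general {F : Type} [Field F] [Fintype F] (n : ℕ)
    (z : An F n)
    (r : ℕ) (α : F) (hr : 0 < r) (hα : α ≠ 0)
    (heq : xbar F n ^ r * z = α • z)
    (hmin : ∀ e : ℕ, 0 < e → (∃ β : F, β ≠ 0 ∧ xbar F n ^ e * z = β • z) → r ≤ e) :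
    classesOf (cyc z) = {P : Set (An F n) | ∃ j < r, P = propClass (xbar F n ^ j * z)} ∧
    Set.ncard (classesOf (cyc z)) = r ∧
    (∀ w ∈ cyc z, (propClass w ∩ cyc z).ncard = period z / r) := by
  have h : IsProjectivePeriod (xbar F n) z r α := ⟨hr, hα, heq, hmin⟩
  refine ⟨?_, h.ncard_classesOf_cyc, ?_⟩
  · rw [h.classesOf_cyc]
    ext P
    exact ⟨fun ⟨j, hj, hP⟩ => ⟨j, hj, hP.symm⟩, fun ⟨j, hj, hP⟩ => ⟨j, hj, hP.symm⟩⟩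
  · rintro _ ⟨j, rfl⟩
    exact h.ncard_propClass_inter_cyc j

/-- Theorem 1, part 2: under the hypotheses of Theorem 1, with
`d_z = n_z / r_z`, the cycle of `z` meets exactly `r_z` distinct proportionality
classes, namely `P_z, P_{x·z}, …, P_{x^{r_z - 1}·z}`, and each of these classes
contains exactly `d_z` elements of the cycle. -/
theorem stmt3 {F : Type} [Field F] [Fintype F] (q n : ℕ)
    (hcard : Fintype.card F = q) (hq : 2 < q) (hn : 0 < n) (hco : Nat.Coprime n q)
    (J : Ideal (An F n)) (z : An F n) (hzJ : z ∈ J) (hz : z ≠ 0)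
    (r : ℕ) (α : F) (hr : 0 < r) (hα : α ≠ 0)
    (heq : xbar F n ^ r * z = α • z)
    (hmin : ∀ e : ℕ, 0 < e → (∃ β : F, β ≠ 0 ∧ xbar F n ^ e * z = β • z) → r ≤ e) :
    classesOf (cyc z) = {P : Set (An F n) | ∃ j < r, P = propClass (xbar F n ^ j * z)} ∧
    Set.ncard (classesOf (cyc z)) = r ∧
    (∀ w ∈ cyc z, (propClass w ∩ cyc z).ncard = period z / r) :=
  stmt3_general n z r α hr hα heq hmin

end CyclicCode
end

section
/- Theorem 2: Let h(x) be a monic irreducible polynomial over GF(q) of degree m > 1 and order n with n ≠ q^m − 1 and gcd(n, q) = 1, and let J ⊆ A_n be the minimal ideal (irreducible cyclic code) with parity-check polynomial h(x). Set d = gcd(q − 1, n) and r = n/d. Then every cycle of a nonzero element of J meets exactly r distinct proportionality classes, each of which contains exactly d elements of the cycle; moreover r divides R, where R = (q^m − 1)/(q − 1) is the number of nonzero proportionality classes of J. -/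
open Polynomial

namespace CyclicCode

open scoped Classical

variable (F : Type) [Field F] [Fintype F]

variable {F}

/-!
A nonzero codeword `z` has minimal polynomial `h`, so `x^j z = α x^k z` holds exactly when
`β^j = α β^k` for the root `β` of `h` in the field `GF(q)[x]/(h)`, where `β` has order `n`.
The nonzero scalars of `GF(q)` are precisely the `(q-1)`-th roots of unity of that field, so
`x^j z` and `x^k z` are proportional iff `β^(j(q-1)) = β^(k(q-1))`, i.e. iff
`j ≡ k [MOD n / gcd(n, q-1)]`. Counting residues of the sequence `j ↦ x^j z`, which has period `n`,
gives `r` classes with `d` elements each. Finally `lcm(q-1, n) = (q-1) r` divides `q^m - 1`, the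
order of the multiplicative group of `GF(q)[x]/(h)`.
-/

theorem _root_.Nat.ModEq.mul_right_iff_div_gcd {m a b c : ℕ} (hm : 0 < m) :
    a * c ≡ b * c [MOD m] ↔ a ≡ b [MOD m / m.gcd c] := by
  refine ⟨Nat.ModEq.cancel_right_div_gcd hm, fun hab => (hab.mul_right' c).of_dvd ?_⟩
  rw [Nat.div_mul_right_comm (Nat.gcd_dvd_left m c)]
  exact Dvd.intro _ (Nat.mul_div_assoc m (Nat.gcd_dvd_right m c)).symm

theorem _root_.Nat.div_gcd_dvd_div_of_dvd {a b c : ℕ} (hac : a ∣ c) (hbc : b ∣ c) :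
    b / a.gcd b ∣ c / a := by
  rw [Nat.dvd_div_iff_mul_dvd hac, ← Nat.mul_div_assoc a (Nat.gcd_dvd_right a b)]
  exact Nat.lcm_dvd hac hbc

section Periodic

variable {β : Type*}

theorem ncard_range_of_modEq {g : ℕ → β} {r : ℕ} (hr : 0 < r)
    (hg : ∀ j k, g j = g k ↔ j ≡ k [MOD r]) : (Set.range g).ncard = r := by
  have hrange : Set.range g = Set.range (fun t : Fin r => g t) := by
    refine subset_antisymm ?_ (Set.range_comp_subset_range _ _)
    rintro _ ⟨j, rfl⟩
    exact ⟨⟨j % r, Nat.mod_lt j hr⟩, (hg _ _).2 (Nat.mod_modEq j r)⟩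
  rw [hrange, Set.ncard_range_of_injective, Nat.card_eq_fintype_card, Fintype.card_fin]
  exact fun t t' htt => Fin.ext (((hg _ _).1 htt).eq_of_lt_of_lt t.2 t'.2)

theorem ncard_image_setOf_modEq {f : ℕ → β} {n r : ℕ} (hn : 0 < n) (hrn : r ∣ n)
    (hf : ∀ j k, f j = f k ↔ j ≡ k [MOD n]) (k : ℕ) :
    (f '' {j | j ≡ k [MOD r]}).ncard = n / r := by
  have hr : 0 < r := Nat.pos_of_dvd_of_pos hrn hn
  have hset : f '' {j | j ≡ k [MOD r]} = Set.range (fun t => f (k % r + r * t)) := by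
    ext w
    constructor
    · rintro ⟨j, hjk, rfl⟩
      refine ⟨j / r, ?_⟩
      simp only [show k % r = j % r from hjk.symm, Nat.mod_add_div]
    · rintro ⟨t, rfl⟩
      refine ⟨k % r + r * t, ?_, rfl⟩
      simp [Nat.ModEq]
  rw [hset]
  refine ncard_range_of_modEq (Nat.div_pos (Nat.le_of_dvd hn hrn) hr) fun t t' => ?_
  rw [hf, Nat.ModEq.rfl.add_iff_left, ← Nat.ModEq.mul_left_cancel_iff' hr.ne' (m := n / r),
    Nat.mul_div_cancel' hrn]

end Periodic

section FiniteField

variable {K L : Type*} [Field K] [Fintype K] [Field L] [Algebra K L]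

theorem mem_range_algebraMap_of_pow_card_eq {x : L} (hx : x ^ Fintype.card K = x) :
    x ∈ Set.range (algebraMap K L) := by
  set f : K[X] := X ^ Fintype.card K - X
  have hf : f ≠ 0 := FiniteField.X_pow_card_sub_X_ne_zero K Fintype.one_lt_card
  have hroots : f.roots.map (algebraMap K L) = (f.map (algebraMap K L)).roots :=
    roots_map_of_injective_of_card_eq_natDegree (algebraMap K L).injective (by
      rw [FiniteField.roots_X_pow_card_sub_X, ← Finset.card_def, Finset.card_univ,
        FiniteField.X_pow_card_sub_X_natDegree_eq K Fintype.one_lt_card])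
  have hx_root : x ∈ (f.map (algebraMap K L)).roots := by
    rw [mem_roots (Polynomial.map_ne_zero hf)]
    simp [f, hx]
  rw [← hroots] at hx_root
  obtain ⟨α, -, rfl⟩ := Multiset.mem_map.mp hx_root
  exact ⟨α, rfl⟩

theorem exists_algebraMap_mul_eq_iff_pow_eq {x y : L} (hy : y ≠ 0) :
    (∃ α : K, α ≠ 0 ∧ x = algebraMap K L α * y) ↔
      x ^ (Fintype.card K - 1) = y ^ (Fintype.card K - 1) := by
  constructor
  · rintro ⟨α, hα, rfl⟩
    rw [mul_pow, ← map_pow, FiniteField.pow_card_sub_one_eq_one α hα, map_one, one_mul]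
  · intro hxy
    have hq : Fintype.card K - 1 + 1 = Fintype.card K := Nat.sub_add_cancel Fintype.card_pos
    have hγ : (x / y) ^ (Fintype.card K - 1) = 1 := by
      rw [div_pow, hxy, div_self (pow_ne_zero _ hy)]
    have hγ0 : x / y ≠ 0 := by
      rintro h0
      rw [h0, zero_pow (Nat.sub_ne_zero_of_lt Fintype.one_lt_card)] at hγ
      exact zero_ne_one hγ
    obtain ⟨α, hα⟩ := mem_range_algebraMap_of_pow_card_eq (K := K) (x := x / y) (by
      rw [← hq, pow_succ, hγ, one_mul])
    refine ⟨α, fun h0 => hγ0 (by rw [← hα, h0, map_zero]), ?_⟩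
    rw [hα, div_mul_cancel₀ x hy]

theorem natCard_adjoinRoot {f : K[X]} (hf : f ≠ 0) :
    Nat.card (AdjoinRoot f) = Fintype.card K ^ f.natDegree := by
  have := (AdjoinRoot.powerBasis hf).finite
  rw [Module.natCard_eq_pow_finrank (K := K), (AdjoinRoot.powerBasis hf).finrank,
    Nat.card_eq_fintype_card, AdjoinRoot.powerBasis_dim]

end FiniteField

theorem orderOf_dvd_natCard_sub_one {L : Type*} [Field L] {x : L} (hx : x ≠ 0) :
    orderOf x ∣ Nat.card L - 1 := by
  rw [← Nat.card_units, ← Units.val_mk0 hx, orderOf_units]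
  exact orderOf_dvd_natCard _

section Code

variable {F : Type} [Field F] {n : ℕ} {h : F[X]} {z : An F n}

theorem polyOrder_eq_orderOf_root (f : F[X]) : polyOrder f = orderOf (AdjoinRoot.root f) := by
  rw [polyOrder, orderOf, Function.minimalPeriod_eq_sInf_n_pos_IsPeriodicPt]
  simp only [isPeriodicPt_mul_iff_pow_eq_one]
  congr! 4 with e
  rw [← AdjoinRoot.mk_eq_zero, map_sub, map_pow, AdjoinRoot.mk_X, map_one, sub_eq_zero]

theorem propClass_eq_orbit (w : An F n) : propClass w = MulAction.orbit Fˣ w := by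
  ext v
  constructor
  · rintro ⟨α, hα, rfl⟩
    exact ⟨Units.mk0 α hα, rfl⟩
  · rintro ⟨α, rfl⟩
    exact ⟨α, α.ne_zero, rfl⟩

theorem propClass_eq_propClass_iff {w w' : An F n} :
    propClass w = propClass w' ↔ w ∈ propClass w' := by
  rw [propClass_eq_orbit, propClass_eq_orbit, MulAction.orbit_eq_iff]

theorem hasMinPoly_of_mem_code (hirr : Irreducible h) (hdvd : h ∣ X ^ n - 1)
    (hz : z ∈ code F n h) (hz0 : z ≠ 0) : HasMinPoly z h := by
  set g : F[X] := (X ^ n - 1) / h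
  obtain ⟨v, rfl⟩ : ∃ v, AdjoinRoot.mk (X ^ n - 1 : F[X]) (g * v) = z := by
    obtain ⟨v, rfl⟩ := Ideal.mem_span_singleton'.mp hz
    obtain ⟨v, rfl⟩ := AdjoinRoot.mk_surjective v
    exact ⟨v, by rw [map_mul, mul_comm]⟩
  have hg : g * h = X ^ n - 1 := by
    rw [mul_comm, EuclideanDomain.mul_div_cancel' hirr.ne_zero hdvd]
  have hg0 : g ≠ 0 := by
    rintro hg0
    simp [hg0] at hz0
  have hv : ¬ h ∣ v := by
    rintro ⟨t, rfl⟩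
    refine hz0 (AdjoinRoot.mk_eq_zero.mpr ⟨t, ?_⟩)
    rw [← hg]
    ring
  intro f
  rw [← map_mul, AdjoinRoot.mk_eq_zero, ← hg, mul_left_comm, mul_dvd_mul_iff_left hg0,
    hirr.prime.dvd_mul, or_iff_left hv]

theorem xbar_pow_mul_eq_smul_iff (hz : HasMinPoly z h) (j k : ℕ) (α : F) :
    xbar F n ^ j * z = α • (xbar F n ^ k * z) ↔
      AdjoinRoot.root h ^ j = algebraMap F (AdjoinRoot h) α * AdjoinRoot.root h ^ k := by
  have hsub : xbar F n ^ j * z - α • (xbar F n ^ k * z) =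
      AdjoinRoot.mk _ (X ^ j - C α * X ^ k) * z := by
    rw [map_sub, map_mul, map_pow, map_pow, AdjoinRoot.mk_X, AdjoinRoot.mk_C, Algebra.smul_def,
      AdjoinRoot.algebraMap_eq, sub_mul, mul_assoc]
    rfl
  rw [← sub_eq_zero, hsub, hz, ← AdjoinRoot.mk_eq_zero, map_sub, map_mul, map_pow, map_pow,
    AdjoinRoot.mk_X, AdjoinRoot.mk_C, sub_eq_zero, AdjoinRoot.algebraMap_eq]

theorem xbar_pow_mul_eq_iff (hz : HasMinPoly z h) (hβ : IsOfFinOrder (AdjoinRoot.root h))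
    (j k : ℕ) :
    xbar F n ^ j * z = xbar F n ^ k * z ↔ j ≡ k [MOD orderOf (AdjoinRoot.root h)] := by
  rw [← one_smul F (xbar F n ^ k * z), xbar_pow_mul_eq_smul_iff hz, map_one, one_mul,
    hβ.pow_eq_pow_iff_modEq]

theorem xbar_pow_mul_mem_propClass_iff [Fintype F] (hirr : Irreducible h) (hz : HasMinPoly z h)
    (hβ : IsOfFinOrder (AdjoinRoot.root h)) (j k : ℕ) :
    xbar F n ^ j * z ∈ propClass (xbar F n ^ k * z) ↔
      j ≡ k [MOD orderOf (AdjoinRoot.root h) /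
        (orderOf (AdjoinRoot.root h)).gcd (Fintype.card F - 1)] := by
  have := Fact.mk hirr
  change (∃ α : F, α ≠ 0 ∧ _ = α • _) ↔ _
  simp_rw [xbar_pow_mul_eq_smul_iff hz]
  rw [exists_algebraMap_mul_eq_iff_pow_eq (pow_ne_zero _ hβ.isUnit.ne_zero), ← pow_mul,
    ← pow_mul, hβ.pow_eq_pow_iff_modEq, Nat.ModEq.mul_right_iff_div_gcd hβ.orderOf_pos]

theorem ncard_classesOf_cyc [Fintype F] (hirr : Irreducible h) (hz : HasMinPoly z h)
    (hβ : IsOfFinOrder (AdjoinRoot.root h)) :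
    (classesOf (cyc z)).ncard = orderOf (AdjoinRoot.root h) /
      (orderOf (AdjoinRoot.root h)).gcd (Fintype.card F - 1) := by
  have hclasses : classesOf (cyc z) = Set.range fun j => propClass (xbar F n ^ j * z) := by
    ext P
    constructor
    · rintro ⟨_, ⟨j, rfl⟩, rfl⟩
      exact ⟨j, rfl⟩
    · rintro ⟨j, rfl⟩
      exact ⟨_, ⟨j, rfl⟩, rfl⟩
  have hN := hβ.orderOf_pos
  rw [hclasses]
  refine ncard_range_of_modEq (Nat.div_pos (Nat.gcd_le_left _ hN) (Nat.gcd_pos_of_pos_left _ hN))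
    fun j k => ?_
  rw [propClass_eq_propClass_iff, xbar_pow_mul_mem_propClass_iff hirr hz hβ]

theorem ncard_propClass_inter_cyc [Fintype F] (hirr : Irreducible h) (hz : HasMinPoly z h)
    (hβ : IsOfFinOrder (AdjoinRoot.root h)) {w : An F n} (hw : w ∈ cyc z) :
    (propClass w ∩ cyc z).ncard = (orderOf (AdjoinRoot.root h)).gcd (Fintype.card F - 1) := by
  obtain ⟨k, rfl⟩ := hw
  set N := orderOf (AdjoinRoot.root h)
  have hinter : propClass (xbar F n ^ k * z) ∩ cyc z =
      (fun j => xbar F n ^ j * z) '' {j | j ≡ k [MOD N / N.gcd (Fintype.card F - 1)]} := by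
    ext w
    constructor
    · rintro ⟨hwk, j, rfl⟩
      exact ⟨j, (xbar_pow_mul_mem_propClass_iff hirr hz hβ j k).mp hwk, rfl⟩
    · rintro ⟨j, hjk, rfl⟩
      exact ⟨(xbar_pow_mul_mem_propClass_iff hirr hz hβ j k).mpr hjk, j, rfl⟩
  have hgN : N.gcd (Fintype.card F - 1) ∣ N := Nat.gcd_dvd_left _ _
  rw [hinter, ncard_image_setOf_modEq hβ.orderOf_pos (Nat.div_dvd_of_dvd hgN)
    (xbar_pow_mul_eq_iff hz hβ) k, Nat.div_div_self hgN hβ.orderOf_pos.ne']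

end Code

theorem stmt6_general {F : Type} [Field F] [Fintype F] (q n m : ℕ)
    (hcard : Fintype.card F = q) (hq : 2 < q)
    (h : F[X]) (hirr : Irreducible h) (hdeg : h.natDegree = m)
    (hord : polyOrder h = n) (hco : Nat.Coprime n q)
    (d r R : ℕ) (hd : d = Nat.gcd (q - 1) n) (hrdef : r = n / d)
    (hR : R = (q ^ m - 1) / (q - 1)) :
    (∀ z : An F n, z ∈ code F n h → z ≠ 0 →
      Set.ncard (classesOf (cyc z)) = r ∧
      ∀ w ∈ cyc z, (propClass w ∩ cyc z).ncard = d) ∧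
    r ∣ R := by
  have hn : n ≠ 0 := by
    rintro rfl
    rw [Nat.coprime_zero_left] at hco
    omega
  have horder : orderOf (AdjoinRoot.root h) = n := (polyOrder_eq_orderOf_root h).symm.trans hord
  have hfin : IsOfFinOrder (AdjoinRoot.root h) := orderOf_ne_zero_iff.mp (horder ▸ hn)
  have hdvd : h ∣ X ^ n - 1 := by
    rw [← AdjoinRoot.mk_eq_zero, map_sub, map_pow, AdjoinRoot.mk_X, map_one, sub_eq_zero,
      ← horder, pow_orderOf_eq_one]
  have hgcd : n.gcd (q - 1) = d := hd ▸ Nat.gcd_comm _ _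
  refine ⟨fun z hz hz0 => ?_, ?_⟩
  · have hmin := hasMinPoly_of_mem_code hirr hdvd hz hz0
    refine ⟨?_, fun w hw => ?_⟩
    · rw [ncard_classesOf_cyc hirr hmin hfin, horder, hcard, hgcd, hrdef]
    · rw [ncard_propClass_inter_cyc hirr hmin hfin hw, horder, hcard, hgcd]
  · have := Fact.mk hirr
    have hnq : n ∣ q ^ m - 1 := by
      rw [← horder, ← hcard, ← hdeg, ← natCard_adjoinRoot hirr.ne_zero]
      exact orderOf_dvd_natCard_sub_one hfin.isUnit.ne_zero
    rw [hR, hrdef, hd]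
    exact Nat.div_gcd_dvd_div_of_dvd (Nat.sub_one_dvd_pow_sub_one q m) hnq

/-- Theorem 2: for an irreducible cyclic code `J ⊆ A_n` whose
monic irreducible parity-check polynomial has degree `m > 1` and order `n ≠ q^m - 1`,
with `d = gcd(q - 1, n)` and `r = n / d`, every cycle of a nonzero element of `J`
meets exactly `r` distinct proportionality classes, each containing exactly `d`
elements of the cycle; moreover `r` divides `R = (q^m - 1)/(q - 1)`. -/
theorem stmt6 {F : Type} [Field F] [Fintype F] (q n m : ℕ)
    (hcard : Fintype.card F = q) (hq : 2 < q) (hm : 1 < m)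
    (h : F[X]) (hmon : h.Monic) (hirr : Irreducible h) (hdeg : h.natDegree = m)
    (hord : polyOrder h = n) (hnp : n ≠ q ^ m - 1) (hco : Nat.Coprime n q)
    (d r R : ℕ) (hd : d = Nat.gcd (q - 1) n) (hrdef : r = n / d)
    (hR : R = (q ^ m - 1) / (q - 1)) :
    (∀ z : An F n, z ∈ code F n h → z ≠ 0 →
      Set.ncard (classesOf (cyc z)) = r ∧
      ∀ w ∈ cyc z, (propClass w ∩ cyc z).ncard = d) ∧
    r ∣ R :=
  stmt6_general q n m hcard hq h hirr hdeg hord hco d r R hd hrdef hR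

end CyclicCode
end

section
/- Corollary 3: Let h_1(x) and h_2(x) be monic irreducible polynomials over GF(q), of degrees m_1 > 1 and m_2 > 1 respectively, having the same order n' with n' ≠ q^{m_1} − 1, n' ≠ q^{m_2} − 1 and gcd(n', q) = 1. Then the parameters d and r of Theorem 2 are the same for the two corresponding minimal ideals: in both cases d = gcd(q − 1, n') and r = n'/d, i.e., every cycle of either minimal ideal meets exactly n'/gcd(q − 1, n') proportionality classes, each containing exactly gcd(q − 1, n') cycle elements. -/
open Polynomial

namespace CyclicCode

open scoped Classical

variable (F : Type) [Field F] [Fintype F]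

variable {F}

lemma modAux {t n i j : ℕ} (ht : t ∣ n) (hn : 0 < n) :
    t ∣ (j + i * (n - 1)) ↔ j ≡ i [MOD t] := by
  have h1 : ∀ a : ℕ, i + (a + i * (n - 1)) = a + i * n := by
    intro a
    cases n with
    | zero => omega
    | succ k => simp only [Nat.succ_sub_one, Nat.mul_succ]; ring
  have hin : t ∣ i * n := Dvd.dvd.mul_left ht i
  constructor
  · intro hd
    have e1 : j + i * n ≡ j + 0 [MOD t] :=
      Nat.ModEq.add_left j ((Nat.modEq_zero_iff_dvd).mpr hin)
    have e2 : i + (j + i * (n - 1)) ≡ i + 0 [MOD t] :=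
      Nat.ModEq.add_left i ((Nat.modEq_zero_iff_dvd).mpr hd)
    have e3 : j + i * n = i + (j + i * (n - 1)) := (h1 j).symm
    calc j = j + 0 := by ring
      _ ≡ j + i * n [MOD t] := e1.symm
      _ = i + (j + i * (n - 1)) := e3
      _ ≡ i + 0 [MOD t] := e2
      _ = i := by ring
  · intro hij
    have e1 : j + i * (n - 1) ≡ i + i * (n - 1) [MOD t] := hij.add_right _
    have e2 : i + i * (n - 1) = i * n := by have := h1 i; omega
    rw [← Nat.modEq_zero_iff_dvd]
    calc j + i * (n - 1) ≡ i + i * (n - 1) [MOD t] := e1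
      _ = i * n := e2
      _ ≡ 0 [MOD t] := (Nat.modEq_zero_iff_dvd).mpr hin


lemma count_resid {r c N : ℕ} (hr : 0 < r) (hc : c < r) (hdvd : r ∣ N) :
    ((Finset.range N).filter (fun j => j % r = c)).card = N / r := by
  obtain ⟨M, rfl⟩ := hdvd
  rw [Nat.mul_div_cancel_left _ hr, ← Finset.card_range M]
  apply Finset.card_bij' (fun j _ => j / r) (fun t _ => c + r * t)
  · intro a ha
    simp only [Finset.mem_filter, Finset.mem_range] at ha ⊢
    rw [Finset.card_range] at ha
    exact Nat.div_lt_of_lt_mul (by omega)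
  · intro a ha
    simp only [Finset.mem_range, Finset.card_range] at ha
    simp only [Finset.mem_filter, Finset.mem_range]
    constructor
    · calc c + r * a < r + r * a := by omega
        _ = r * (a + 1) := by ring
        _ ≤ r * (Finset.range M).card := by rw [Finset.card_range]; exact Nat.mul_le_mul_left r ha
    · rw [Nat.add_mul_mod_self_left, Nat.mod_eq_of_lt hc]
  · intro a ha
    simp only [Finset.mem_filter, Finset.mem_range] at ha
    rw [← ha.2]
    exact Nat.mod_add_div a r
  · intro a _
    rw [Nat.add_mul_div_left _ _ hr, Nat.div_eq_of_lt hc, zero_add]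


lemma propClass_smul {n : ℕ} (z : An F n) (α : F) (hα : α ≠ 0) :
    propClass (α • z) = propClass z := by
  ext w
  constructor
  · rintro ⟨β, hβ, rfl⟩
    exact ⟨β * α, mul_ne_zero hβ hα, smul_smul β α z⟩
  · rintro ⟨β, hβ, rfl⟩
    refine ⟨β * α⁻¹, mul_ne_zero hβ (inv_ne_zero hα), ?_⟩
    rw [smul_smul, mul_assoc, inv_mul_cancel₀ hα, mul_one]

lemma key {F : Type} [Field F] [Fintype F] (q n' : ℕ)
    (hcard : Fintype.card F = q) (hq : 2 < q)
    (h : F[X]) (hirr : Irreducible h) (hdeg : 1 < h.natDegree)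
    (hord : polyOrder h = n') (hco : Nat.Coprime n' q) :
    ∀ z : An F n', z ∈ code F n' h → z ≠ 0 →
      Set.ncard (classesOf (cyc z)) = n' / Nat.gcd (q - 1) n' ∧
      ∀ w ∈ cyc z, (propClass w ∩ cyc z).ncard = Nat.gcd (q - 1) n' := by
  intro z hz hz0
  -- basic numerology
  have hq1 : 0 < q - 1 := by omega
  set d : ℕ := Nat.gcd (q - 1) n' with hd
  have hn0 : n' ≠ 0 := by
    rintro rfl
    rw [Nat.coprime_zero_left] at hco
    omega
  have hn'pos : 0 < n' := Nat.pos_of_ne_zero hn0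
  have hd0 : 0 < d := Nat.gcd_pos_of_pos_left _ hq1
  have hdn : d ∣ n' := Nat.gcd_dvd_right _ _
  have hdq : d ∣ q - 1 := Nat.gcd_dvd_left _ _
  set r0 : ℕ := n' / d with hr0
  have hr0dvd : r0 ∣ n' := Nat.div_dvd_of_dvd hdn
  have hr0pos : 0 < r0 := Nat.div_pos (Nat.le_of_dvd hn'pos hdn) hd0
  -- the field K = F[X]/(h) and β = image of X
  haveI := Fact.mk hirr
  set K := AdjoinRoot h with hK
  set β : K := AdjoinRoot.root h with hβdef
  have hdvd_iff : ∀ e : ℕ, (h ∣ X ^ e - 1) ↔ β ^ e = 1 := by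
    intro e
    rw [← AdjoinRoot.mk_eq_zero, map_sub, map_pow, AdjoinRoot.mk_X, map_one, sub_eq_zero]
  -- n' is the order of β
  have hSne : {e : ℕ | 0 < e ∧ h ∣ X ^ e - 1}.Nonempty := by
    by_contra hne
    rw [Set.not_nonempty_iff_eq_empty] at hne
    have : polyOrder h = 0 := by rw [polyOrder, hne, Nat.sInf_empty]
    omega
  have hmem : 0 < n' ∧ h ∣ X ^ n' - 1 := by
    have := Nat.sInf_mem hSne
    rw [show sInf {e : ℕ | 0 < e ∧ h ∣ X ^ e - 1} = n' from hord] at this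
    exact this
  have hβn : β ^ n' = 1 := (hdvd_iff n').mp hmem.2
  have hβ0 : β ≠ 0 := by
    intro h0
    rw [h0, zero_pow hn0] at hβn
    exact zero_ne_one hβn
  have hofin : 0 < orderOf β :=
    orderOf_pos_iff.mpr (isOfFinOrder_iff_pow_eq_one.mpr ⟨n', hn'pos, hβn⟩)
  have horder : orderOf β = n' := by
    refine le_antisymm (orderOf_le_of_pow_eq_one hn'pos hβn) ?_
    rw [← hord]
    exact Nat.sInf_le ⟨hofin, (hdvd_iff _).mpr (pow_orderOf_eq_one β)⟩
  have hpow_iff : ∀ e : ℕ, β ^ e = 1 ↔ n' ∣ e := by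
    intro e
    rw [← orderOf_dvd_iff_pow_eq_one, horder]
  -- the image of F* in K is exactly the (q-1)-th roots of unity
  have himg : ∀ k : ℕ, (∃ α : F, α ≠ 0 ∧ β ^ k = algebraMap F K α) ↔ r0 ∣ k := by
    intro k
    constructor
    · rintro ⟨α, hα, he⟩
      have h1 : β ^ (k * (q - 1)) = 1 := by
        rw [pow_mul, he, ← map_pow]
        have : α ^ (q - 1) = 1 := by
          rw [← hcard]; exact FiniteField.pow_card_sub_one_eq_one α hα
        rw [this, map_one]
      rw [hpow_iff] at h1
      -- n' ∣ k * (q-1) implies r0 ∣ k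
      set s : ℕ := (q - 1) / d with hs
      have hcop : Nat.Coprime r0 s := (Nat.coprime_div_gcd_div_gcd hd0).symm
      have hn'eq : r0 * d = n' := Nat.div_mul_cancel hdn
      have hqeq : s * d = q - 1 := Nat.div_mul_cancel hdq
      have h2 : r0 * d ∣ (k * s) * d := by
        rw [hn'eq, mul_assoc, hqeq]; exact h1
      have h3 : r0 ∣ k * s := (Nat.mul_dvd_mul_iff_right hd0).mp h2
      exact hcop.dvd_of_dvd_mul_right h3
    · rintro ⟨t, rfl⟩
      -- β ^ (r0 * t) is a (q-1)-th root of unity, hence in the image of F*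
      have hroot : (β ^ (r0 * t)) ^ (q - 1) = 1 := by
        have e1 : r0 * t * (q - 1) = n' * ((q - 1) / d * t) := by
          have hqq : (q - 1) / d * d = q - 1 := Nat.div_mul_cancel hdq
          have hnn : r0 * d = n' := Nat.div_mul_cancel hdn
          calc r0 * t * (q - 1) = r0 * t * ((q - 1) / d * d) := by rw [hqq]
            _ = (r0 * d) * ((q - 1) / d * t) := by ring
            _ = n' * ((q - 1) / d * t) := by rw [hnn]
        rw [← pow_mul, e1, pow_mul, hβn, one_pow]
      set Im : Set K := (algebraMap F K) '' {α : F | α ≠ 0} with hIm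
      set R : Set K := {y : K | y ^ (q - 1) = 1} with hR
      have hsub : Im ⊆ R := by
        rintro y ⟨α, hα, rfl⟩
        show (algebraMap F K α) ^ (q - 1) = 1
        rw [← map_pow, ← hcard, FiniteField.pow_card_sub_one_eq_one α hα, map_one]
      have hReq : R = ↑((nthRoots (q - 1) (1 : K)).toFinset) := by
        ext y
        simp only [hR, Set.mem_setOf_eq, Finset.coe_sort_coe, Multiset.mem_toFinset,
          Finset.mem_coe, mem_nthRoots hq1]
      have hRfin : R.Finite := by rw [hReq]; exact (Multiset.toFinset _).finite_toSet
      have hRcard : R.ncard ≤ q - 1 := by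
        rw [hReq, Set.ncard_coe_finset]
        exact le_trans (Multiset.toFinset_card_le _) (card_nthRoots _ _)
      have hImcard : Im.ncard = q - 1 := by
        rw [hIm, Set.ncard_image_of_injective _ (algebraMap F K).injective]
        have : {α : F | α ≠ 0} = ↑((Finset.univ : Finset F).erase 0) := by
          ext α; simp
        rw [this, Set.ncard_coe_finset, Finset.card_erase_of_mem (Finset.mem_univ 0),
          Finset.card_univ, hcard]
      have hEq : Im = R := Set.eq_of_subset_of_ncard_le hsub (by omega) hRfin
      have : β ^ (r0 * t) ∈ R := hroot
      rw [← hEq] at this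
      obtain ⟨α, hα, he⟩ := this
      exact ⟨α, hα, he.symm⟩
  -- the annihilator of z is (h)
  have hPm : (X ^ n' - 1 : F[X]).Monic := by
    have := monic_X_pow_sub_C (1 : F) hn0
    rwa [map_one] at this
  have hP0 : (X ^ n' - 1 : F[X]) ≠ 0 := hPm.ne_zero
  have hh0 : h ≠ 0 := hirr.ne_zero
  have hfact : h * ((X ^ n' - 1 : F[X]) / h) = X ^ n' - 1 :=
    EuclideanDomain.mul_div_cancel' hh0 hmem.2
  set g : F[X] := (X ^ n' - 1 : F[X]) / h with hg
  have hg0 : g ≠ 0 := by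
    intro h0
    rw [h0, mul_zero] at hfact
    exact hP0 hfact.symm
  obtain ⟨c, hc⟩ := Ideal.mem_span_singleton.mp hz
  obtain ⟨c', rfl⟩ := AdjoinRoot.mk_surjective c
  rw [show ((X ^ n' - 1 : F[X]) / h) = g from rfl] at hc
  have hprime : Prime h := hirr.prime
  have hhc' : ¬ h ∣ c' := by
    intro hdvd
    apply hz0
    rw [hc, ← map_mul, AdjoinRoot.mk_eq_zero]
    obtain ⟨u, rfl⟩ := hdvd
    exact ⟨u, by rw [← hfact]; ring⟩
  have hann : ∀ f : F[X], AdjoinRoot.mk (X ^ n' - 1 : F[X]) f * z = 0 ↔ h ∣ f := by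
    intro f
    rw [hc, ← map_mul, ← map_mul, AdjoinRoot.mk_eq_zero]
    constructor
    · intro hdvd
      have h1 : g * h ∣ g * (f * c') := by
        rw [show g * h = (X ^ n' - 1 : F[X]) from by rw [← hfact]; ring]
        exact hdvd.trans (dvd_of_eq (by ring))
      have h2 : h ∣ f * c' := (mul_dvd_mul_iff_left hg0).mp h1
      rcases hprime.2.2 f c' h2 with h3 | h3
      · exact h3
      · exact absurd h3 hhc'
    · intro hdvd
      obtain ⟨u, rfl⟩ := hdvd
      exact ⟨u * c', by rw [← hfact]; ring⟩
  -- the key relation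
  have hrel : ∀ (cc : K) (i j : ℕ), (β ^ j = cc * β ^ i ↔ β ^ (j + i * (n' - 1)) = cc) := by
    intro cc i j
    have harith1 : i + i * (n' - 1) = i * n' := by
      cases n' with
      | zero => omega
      | succ k => rw [Nat.succ_sub_one, Nat.mul_succ]; ring
    have harith2 : i * (n' - 1) + i = i * n' := by omega
    have hβin : β ^ (i * n') = 1 := by rw [mul_comm, pow_mul, hβn, one_pow]
    constructor
    · intro he
      have h2 : β ^ j * β ^ (i * (n' - 1)) = cc * β ^ i * β ^ (i * (n' - 1)) := by rw [he]
      rw [← pow_add, mul_assoc, ← pow_add, harith1, hβin, mul_one] at h2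
      exact h2
    · intro he
      rw [← he, ← pow_add, add_assoc, harith2, pow_add, hβin, mul_one]
  have hxbar : ∀ k : ℕ, AdjoinRoot.mk (X ^ n' - 1 : F[X]) (X ^ k) = xbar F n' ^ k := by
    intro k
    rw [map_pow, AdjoinRoot.mk_X]
    rfl
  have hmkh : ∀ (i j : ℕ) (α : F),
      AdjoinRoot.mk h (X ^ j - C α * X ^ i) = β ^ j - algebraMap F K α * β ^ i := by
    intro i j α
    rw [map_sub, map_mul, map_pow, AdjoinRoot.mk_X, map_pow, AdjoinRoot.mk_X,
      AdjoinRoot.mk_C, ← AdjoinRoot.algebraMap_eq]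
  have hKey : ∀ (i j : ℕ) (α : F),
      (xbar F n' ^ j * z = α • (xbar F n' ^ i * z)) ↔ β ^ j = algebraMap F K α * β ^ i := by
    intro i j α
    have e1 : xbar F n' ^ j * z - α • (xbar F n' ^ i * z)
        = AdjoinRoot.mk (X ^ n' - 1 : F[X]) (X ^ j - C α * X ^ i) * z := by
      rw [map_sub, map_mul, hxbar, hxbar, AdjoinRoot.mk_C, ← AdjoinRoot.algebraMap_eq,
        ← Algebra.smul_def, sub_mul, smul_mul_assoc]
    constructor
    · intro he
      have h2 : AdjoinRoot.mk (X ^ n' - 1 : F[X]) (X ^ j - C α * X ^ i) * z = 0 := by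
        rw [← e1, he, sub_self]
      have h3 := (hann _).mp h2
      rw [← AdjoinRoot.mk_eq_zero (f := h), hmkh, sub_eq_zero] at h3
      exact h3
    · intro he
      have h3 : h ∣ X ^ j - C α * X ^ i := by
        rw [← AdjoinRoot.mk_eq_zero (f := h), hmkh, sub_eq_zero]
        exact he
      have h2 := (hann _).mpr h3
      rw [← e1, sub_eq_zero] at h2
      exact h2
  -- derived index relations
  set f : ℕ → An F n' := fun j => xbar F n' ^ j * z with hf
  have hfeq : ∀ i j : ℕ, f i = f j ↔ i ≡ j [MOD n'] := by
    intro i j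
    have h1 := hKey j i (1 : F)
    rw [one_smul] at h1
    rw [hrel _ j i, map_one, hpow_iff, modAux (dvd_refl n') hn'pos] at h1
    exact h1
  have hmemP : ∀ i j : ℕ, (f j ∈ propClass (f i)) ↔ j ≡ i [MOD r0] := by
    intro i j
    constructor
    · rintro ⟨α, hα, he⟩
      have he' : xbar F n' ^ j * z = α • (xbar F n' ^ i * z) := he
      rw [hKey i j α, hrel _ i j] at he'
      exact (modAux hr0dvd hn'pos).mp ((himg _).mp ⟨α, hα, he'⟩)
    · intro hji
      have h1 : r0 ∣ j + i * (n' - 1) := (modAux hr0dvd hn'pos).mpr hji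
      obtain ⟨α, hα, he⟩ := (himg _).mpr h1
      exact ⟨α, hα, (hKey i j α).mpr ((hrel _ i j).mpr he)⟩
  have hinjn : ∀ i j : ℕ, i < n' → j < n' → f i = f j → i = j := by
    intro i j hi hj hfij
    have := (hfeq i j).mp hfij
    rwa [Nat.ModEq, Nat.mod_eq_of_lt hi, Nat.mod_eq_of_lt hj] at this
  have hcyc : cyc z = f '' {j : ℕ | j < n'} := by
    ext w
    constructor
    · rintro ⟨j, rfl⟩
      exact ⟨j % n', Nat.mod_lt _ hn'pos, (hfeq (j % n') j).mpr (Nat.mod_modEq j n')⟩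
    · rintro ⟨j, _, rfl⟩
      exact ⟨j, rfl⟩
  constructor
  -- number of classes
  · have himage : classesOf (cyc z) = (fun i => propClass (f i)) '' {i : ℕ | i < r0} := by
      ext Q
      constructor
      · rintro ⟨w, ⟨j, rfl⟩, rfl⟩
        refine ⟨j % r0, Nat.mod_lt _ hr0pos, ?_⟩
        have h1 : (j : ℕ) ≡ j % r0 [MOD r0] := (Nat.mod_modEq j r0).symm
        have h2 : f j ∈ propClass (f (j % r0)) := (hmemP _ _).mpr h1
        obtain ⟨α, hα, he⟩ := h2
        show propClass (f (j % r0)) = propClass (f j)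
        rw [he, propClass_smul _ _ hα]
      · rintro ⟨i, _, rfl⟩
        exact ⟨f i, ⟨i, rfl⟩, rfl⟩
    rw [himage]
    rw [Set.ncard_image_of_injOn]
    · have : {i : ℕ | i < r0} = ↑(Finset.range r0) := by ext i; simp
      rw [this, Set.ncard_coe_finset, Finset.card_range]
    · intro i hi j hj hij
      simp only [Set.mem_setOf_eq] at hi hj
      have hij' : propClass (f i) = propClass (f j) := hij
      have h1 : f i ∈ propClass (f j) := by
        rw [← hij']
        exact ⟨1, one_ne_zero, (one_smul F (f i)).symm⟩
      have h2 := (hmemP j i).mp h1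
      rwa [Nat.ModEq, Nat.mod_eq_of_lt hi, Nat.mod_eq_of_lt hj] at h2
  -- size of each class ∩ cycle
  · intro w hw
    obtain ⟨i, rfl⟩ := hw
    show (propClass (f i) ∩ cyc z).ncard = d
    have hset : propClass (f i) ∩ cyc z = f '' {j : ℕ | j < n' ∧ j ≡ i [MOD r0]} := by
      ext w
      constructor
      · rintro ⟨hPm', hC⟩
        rw [hcyc] at hC
        obtain ⟨j, hj, rfl⟩ := hC
        exact ⟨j, ⟨hj, (hmemP i j).mp hPm'⟩, rfl⟩
      · rintro ⟨j, ⟨hj1, hj2⟩, rfl⟩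
        exact ⟨(hmemP i j).mpr hj2, ⟨j, rfl⟩⟩
    rw [hset, Set.ncard_image_of_injOn (fun a ha b hb hab => hinjn a b ha.1 hb.1 hab)]
    have hsetF : {j : ℕ | j < n' ∧ j ≡ i [MOD r0]}
        = ↑((Finset.range n').filter (fun j => j % r0 = i % r0)) := by
      ext j
      simp only [Set.mem_setOf_eq, Finset.coe_filter, Finset.mem_range, Nat.ModEq]
    rw [hsetF, Set.ncard_coe_finset,
      count_resid hr0pos (Nat.mod_lt _ hr0pos) hr0dvd, Nat.div_div_self hdn hn0]

/-- Corollary 3: two monic irreducible polynomials over `GF(q)` of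
degrees `m₁, m₂ > 1` having the same (nonprimitive) order `n'` yield the same
parameters `d = gcd(q - 1, n')` and `r = n' / d` in Theorem 2: every cycle of a
nonzero element of either minimal ideal meets exactly `r` proportionality classes,
each containing exactly `d` elements of the cycle. -/
theorem stmt8 {F : Type} [Field F] [Fintype F] (q n' m₁ m₂ : ℕ)
    (hcard : Fintype.card F = q) (hq : 2 < q) (hm₁ : 1 < m₁) (hm₂ : 1 < m₂)
    (h₁ h₂ : F[X]) (hmon₁ : h₁.Monic) (hmon₂ : h₂.Monic)
    (hirr₁ : Irreducible h₁) (hirr₂ : Irreducible h₂)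
    (hdeg₁ : h₁.natDegree = m₁) (hdeg₂ : h₂.natDegree = m₂)
    (hord₁ : polyOrder h₁ = n') (hord₂ : polyOrder h₂ = n')
    (hnp₁ : n' ≠ q ^ m₁ - 1) (hnp₂ : n' ≠ q ^ m₂ - 1) (hco : Nat.Coprime n' q) :
    ∀ z : An F n', (z ∈ code F n' h₁ ∨ z ∈ code F n' h₂) → z ≠ 0 →
      Set.ncard (classesOf (cyc z)) = n' / Nat.gcd (q - 1) n' ∧
      ∀ w ∈ cyc z, (propClass w ∩ cyc z).ncard = Nat.gcd (q - 1) n' := by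
  intro z hz hz0
  rcases hz with hz | hz
  · exact key q n' hcard hq h₁ hirr₁ (by rw [hdeg₁]; exact hm₁) hord₁ hco z hz hz0
  · exact key q n' hcard hq h₂ hirr₂ (by rw [hdeg₂]; exact hm₂) hord₂ hco z hz hz0

end CyclicCode
end

section
/- Corollary 5: Let K ⊆ A_n be an irreducible cyclic code with monic irreducible parity-check polynomial h(x) of degree m > 1 and order n, where n ≠ q^m − 1 and gcd(n, q) = 1. Set d = gcd(q − 1, n), r = n/d, b = (q − 1)/d, R = (q^m − 1)/(q − 1), and let s = R·(q − 1)/n be the number of cycles of nonzero elements of K. Then the conditions s = b, r = R, and gcd(s, R) = 1 are pairwise equivalent, and if any of them holds then K is equidistant, i.e., all nonzero codewords of K have the same Hamming weight. -/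
open Polynomial

namespace CyclicCode

open scoped Classical

variable (F : Type) [Field F] [Fintype F]

variable {F}

section WtLemmas

set_option linter.unusedSectionVars false

variable {F : Type} [Field F] [Fintype F] {n : ℕ}

lemma monicXn (hn : 0 < n) : (X ^ n - 1 : F[X]).Monic := by
  simpa using monic_X_pow_sub_C (1 : F) hn.ne'

lemma rep_mk (hn : 0 < n) (f : F[X]) :
    rep (AdjoinRoot.mk (X ^ n - 1 : F[X]) f) = f %ₘ (X ^ n - 1) := by
  rw [rep, dif_pos (monicXn hn), AdjoinRoot.modByMonicHom_mk]

lemma mk_rep (hn : 0 < n) (z : An F n) :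
    AdjoinRoot.mk (X ^ n - 1 : F[X]) (rep z) = z := by
  rw [rep, dif_pos (monicXn hn)]
  exact AdjoinRoot.mk_leftInverse (monicXn hn) z

lemma degreeXn (hn : 0 < n) : (X ^ n - 1 : F[X]).degree = (n : WithBot ℕ) := by
  have h2 : ((X : F[X]) ^ n - C 1).degree = (n : WithBot ℕ) := degree_X_pow_sub_C hn 1
  rwa [C_1] at h2

lemma degree_rep_lt (hn : 0 < n) (z : An F n) : (rep z).degree < (n : WithBot ℕ) := by
  obtain ⟨f, rfl⟩ := AdjoinRoot.mk_surjective z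
  rw [rep_mk hn]
  have h1 := Polynomial.degree_modByMonic_lt f (monicXn hn)
  rwa [degreeXn hn] at h1

lemma wt_smul (hn : 0 < n) {α : F} (hα : α ≠ 0) (z : An F n) : wt (α • z) = wt z := by
  have h1 : rep (α • z) = α • rep z := by
    simp only [rep, dif_pos (monicXn hn), map_smul]
  rw [wt, wt, h1]
  congr 1
  ext i
  simp [Polynomial.mem_support_iff, Polynomial.coeff_smul, smul_eq_mul, hα]

lemma wt_xbar_mul (hn : 0 < n) (z : An F n) : wt (xbar F n * z) = wt z := by
  classical
  have hMm : (X ^ n - 1 : F[X]).Monic := monicXn hn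
  set p : F[X] := rep z with hp
  have hdp : p.degree < (n : WithBot ℕ) := degree_rep_lt hn z
  set c : F := p.coeff (n - 1) with hc
  set r : F[X] := X * p - C c * (X ^ n - 1) with hr
  have hpc : ∀ k : ℕ, n ≤ k → p.coeff k = 0 := by
    intro k hk
    apply Polynomial.coeff_eq_zero_of_degree_lt
    exact lt_of_lt_of_le hdp (by exact_mod_cast hk)
  have hrc : ∀ j, r.coeff j = if j = 0 then c else if j < n then p.coeff (j - 1) else 0 := by
    intro j
    rcases j with _ | k
    · rw [if_pos rfl]
      simp only [hr, coeff_sub, coeff_X_mul_zero, coeff_C_mul, coeff_sub, coeff_X_pow,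
        Polynomial.coeff_one, if_neg (by omega : ¬ (0 = n)), if_pos rfl]
      simp
    · rw [if_neg (Nat.succ_ne_zero k)]
      have hbase : r.coeff (k + 1) =
          p.coeff k - c * ((if k + 1 = n then 1 else 0) - 0) := by
        simp only [hr, coeff_sub, coeff_X_mul, coeff_C_mul, coeff_X_pow,
          Polynomial.coeff_one, if_neg (Nat.succ_ne_zero k)]
      rcases lt_trichotomy (k+1) n with hlt | heq | hgt
      · rw [if_pos hlt, hbase, if_neg (by omega)]
        simp
      · rw [if_neg (by omega), hbase, if_pos heq]
        have hpk : p.coeff k = c := by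
          have : k = n - 1 := by omega
          rw [this]
        rw [hpk]; ring
      · rw [if_neg (by omega), hbase, if_neg (by omega), hpc k (by omega)]
        ring
  have hrdlt : r.degree < (X ^ n - 1 : F[X]).degree := by
    rw [degreeXn hn]
    rw [Polynomial.degree_lt_iff_coeff_zero]
    intro k hk
    have hk' : n ≤ k := by exact_mod_cast hk
    rw [hrc k, if_neg (by omega), if_neg (by omega)]
  have hrep : rep (xbar F n * z) = r := by
    have h1 : xbar F n * z = AdjoinRoot.mk (X ^ n - 1 : F[X]) (X * p) := by
      conv_lhs => rw [← mk_rep hn z]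
      rw [map_mul,
        show xbar F n = AdjoinRoot.mk (X ^ n - 1 : F[X]) X from (AdjoinRoot.mk_X).symm]
    rw [h1, rep_mk hn]
    have h2 : X * p = C c * (X ^ n - 1) + r := by rw [hr]; ring
    rw [h2, add_modByMonic, mul_self_modByMonic hMm,
      (modByMonic_eq_self_iff hMm).mpr hrdlt, zero_add]
  have hmemp : ∀ i ∈ p.support, i < n := by
    intro i hi
    by_contra hni
    exact (Polynomial.mem_support_iff.mp hi) (hpc i (by omega))
  rw [wt, wt, hrep, ← hp]
  refine (Finset.card_bij (fun i _ => if i = n - 1 then 0 else i + 1) ?_ ?_ ?_).symm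
  · intro i hi
    rw [Polynomial.mem_support_iff]
    show r.coeff (if i = n - 1 then 0 else i + 1) ≠ 0
    by_cases hie : i = n - 1
    · rw [if_pos hie, hrc 0, if_pos rfl, hc]
      rw [hie] at hi
      exact Polynomial.mem_support_iff.mp hi
    · have hilt : i < n := hmemp i hi
      rw [if_neg hie, hrc (i + 1), if_neg (Nat.succ_ne_zero i), if_pos (by omega)]
      simpa using Polynomial.mem_support_iff.mp hi
  · intro a ha a' ha' hfe
    have h1 : a < n := hmemp a ha
    have h2 : a' < n := hmemp a' ha'
    have hfe' : (if a = n - 1 then 0 else a + 1) = (if a' = n - 1 then 0 else a' + 1) := hfe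
    split_ifs at hfe' <;> omega
  · intro j hj
    have hjc := Polynomial.mem_support_iff.mp hj
    rw [hrc j] at hjc
    by_cases hj0 : j = 0
    · refine ⟨n - 1, ?_, ?_⟩
      · rw [Polynomial.mem_support_iff, ← hc]
        rw [if_pos hj0] at hjc
        exact hjc
      · show (if n - 1 = n - 1 then 0 else (n - 1) + 1) = j
        rw [if_pos rfl, hj0]
    · rw [if_neg hj0] at hjc
      by_cases hjn : j < n
      · rw [if_pos hjn] at hjc
        refine ⟨j - 1, Polynomial.mem_support_iff.mpr hjc, ?_⟩
        show (if j - 1 = n - 1 then 0 else (j - 1) + 1) = j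
        rw [if_neg (by omega)]
        omega
      · rw [if_neg hjn] at hjc
        exact absurd rfl hjc

lemma wt_xbar_pow_mul (hn : 0 < n) (j : ℕ) (z : An F n) :
    wt (xbar F n ^ j * z) = wt z := by
  induction j with
  | zero => simp
  | succ k ih =>
      have : xbar F n ^ (k + 1) * z = xbar F n * (xbar F n ^ k * z) := by ring
      rw [this, wt_xbar_mul hn, ih]

end WtLemmas

lemma arith {q n m d r b R s : ℕ} (hq : 2 < q) (hm : 0 < m) (hn : 0 < n)
    (hdvd : n ∣ q ^ m - 1)
    (hd : d = Nat.gcd (q - 1) n) (hrdef : r = n / d) (hb : b = (q - 1) / d)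
    (hR : R = (q ^ m - 1) / (q - 1)) (hs : s = R * (q - 1) / n) :
    (n * s = q ^ m - 1) ∧ (b * d = q - 1) ∧ ((s = b ↔ r = R) ∧ (r = R ↔ Nat.gcd s R = 1)) := by
  have hq1 : 0 < q - 1 := by omega
  have hqm : q ≤ q ^ m := Nat.le_self_pow hm.ne' q
  have hNpos : 0 < q ^ m - 1 := by omega
  have hq1d : (q - 1) ∣ (q ^ m - 1) := by
    simpa using Nat.sub_dvd_pow_sub_pow q 1 m
  have hRq : R * (q - 1) = q ^ m - 1 := by rw [hR]; exact Nat.div_mul_cancel hq1d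
  have hns : n * s = q ^ m - 1 := by rw [hs, hRq]; exact Nat.mul_div_cancel' hdvd
  have hdpos : 0 < d := by rw [hd]; exact Nat.gcd_pos_of_pos_left _ hq1
  have hdn : d ∣ n := hd ▸ Nat.gcd_dvd_right _ _
  have hdq : d ∣ (q - 1) := hd ▸ Nat.gcd_dvd_left _ _
  have hrd : r * d = n := by rw [hrdef]; exact Nat.div_mul_cancel hdn
  have hbd : b * d = q - 1 := by rw [hb]; exact Nat.div_mul_cancel hdq
  have key : r * s = R * b := by
    have h1 : (r * s) * d = (R * b) * d := by
      calc (r * s) * d = (r * d) * s := by ring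
        _ = n * s := by rw [hrd]
        _ = R * (q - 1) := by rw [hns, hRq]
        _ = R * (b * d) := by rw [hbd]
        _ = (R * b) * d := by ring
    exact Nat.eq_of_mul_eq_mul_right hdpos h1
  have hrpos : 0 < r := by
    rcases Nat.eq_zero_or_pos r with h0 | h; · rw [h0, zero_mul] at hrd; omega
    exact h
  have hspos : 0 < s := by
    rcases Nat.eq_zero_or_pos s with h0 | h; · rw [h0, mul_zero] at hns; omega
    exact h
  have hbpos : 0 < b := by
    rcases Nat.eq_zero_or_pos b with h0 | h; · rw [h0, zero_mul] at hbd; omega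
    exact h
  have hcop : Nat.Coprime b r := by
    rw [hb, hrdef, hd]
    exact Nat.coprime_div_gcd_div_gcd (hd ▸ hdpos)
  have eq1 : s = b ↔ r = R := by
    constructor
    · intro hsb
      apply Nat.eq_of_mul_eq_mul_left hspos
      rw [mul_comm s r, key, hsb, mul_comm]
    · intro hrR
      apply Nat.eq_of_mul_eq_mul_left hrpos
      rw [key, hrR]
  refine ⟨hns, hbd, eq1, ?_⟩
  constructor
  · intro hrR
    have hsb : s = b := eq1.mpr hrR
    rw [hsb, ← hrR]
    exact hcop
  · intro hg
    have hcopRs : Nat.Coprime R s := (Nat.coprime_comm.mp hg)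
    have hRr : R ∣ r := by
      apply hcopRs.dvd_of_dvd_mul_right
      rw [key]; exact dvd_mul_right R b
    have hbs : b ∣ s := by
      apply hcop.dvd_of_dvd_mul_left
      rw [key]; exact dvd_mul_left b R
    obtain ⟨k, hk⟩ := hbs
    have hrk : r * k = R := by
      have : r * (b * k) = R * b := by rw [← hk]; exact key
      have h2 : (r * k) * b = R * b := by rw [← this]; ring
      exact Nat.eq_of_mul_eq_mul_right hbpos h2
    exact Nat.dvd_antisymm (hrk ▸ Dvd.intro k rfl) hRr


/-- Corollary 5: for an irreducible nonprimitive cyclic code `K`,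
with `d = gcd(q - 1, n)`, `r = n/d`, `b = (q - 1)/d`, `R = (q^m - 1)/(q - 1)` and
`s = R(q - 1)/n` the number of cycles of nonzero elements, the conditions
`s = b`, `r = R`, `gcd(s, R) = 1` are pairwise equivalent, and if any holds then
`K` is equidistant. -/
theorem stmt10 {F : Type} [Field F] [Fintype F] (q n m : ℕ)
    (hcard : Fintype.card F = q) (hq : 2 < q) (hm : 1 < m)
    (h : F[X]) (hmon : h.Monic) (hirr : Irreducible h) (hdeg : h.natDegree = m)
    (hord : polyOrder h = n) (hnp : n ≠ q ^ m - 1) (hco : Nat.Coprime n q)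
    (d r b R s : ℕ) (hd : d = Nat.gcd (q - 1) n) (hrdef : r = n / d)
    (hb : b = (q - 1) / d) (hR : R = (q ^ m - 1) / (q - 1))
    (hs : s = R * (q - 1) / n) :
    (s = b ↔ r = R) ∧ (r = R ↔ Nat.gcd s R = 1) ∧
    (s = b → ∀ z : An F n, z ∈ code F n h → z ≠ 0 →
      ∀ w : An F n, w ∈ code F n h → w ≠ 0 → wt z = wt w) := by
  classical
  -- n is positive
  have hn : 0 < n := by
    rcases Nat.eq_zero_or_pos n with h0 | h1
    · rw [h0] at hco
      rw [Nat.coprime_zero_left] at hco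
      omega
    · exact h1
  -- h divides X^n - 1
  have hdvdXn : h ∣ (X ^ n - 1 : F[X]) := by
    have hne : {e : ℕ | 0 < e ∧ h ∣ X ^ e - 1}.Nonempty := by
      by_contra he
      rw [Set.not_nonempty_iff_eq_empty] at he
      rw [polyOrder, he, Nat.sInf_empty] at hord
      omega
    have hmem := Nat.sInf_mem hne
    rw [← polyOrder, hord] at hmem
    exact hmem.2
  have hh0 : h ≠ 0 := hmon.ne_zero
  haveI : Fact (Irreducible h) := ⟨hirr⟩
  -- the field L = F[X]/(h)
  set L := AdjoinRoot h with hL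
  haveI : Fintype L := Module.fintypeOfFintype (AdjoinRoot.powerBasisAux' hmon)
  have hcardL : Fintype.card L = q ^ m := by
    rw [Module.card_fintype (AdjoinRoot.powerBasisAux' hmon), hcard, Fintype.card_fin, hdeg]
  set θ : L := AdjoinRoot.root h with hθ
  have hiff : ∀ f : F[X], aeval θ f = 0 ↔ h ∣ f := fun f => by
    rw [AdjoinRoot.aeval_eq, AdjoinRoot.mk_eq_zero]
  have hθh : aeval θ h = 0 := (hiff h).mpr dvd_rfl
  have hθn : θ ^ n = 1 := by
    have h1 : aeval θ (X ^ n - 1 : F[X]) = 0 := (hiff _).mpr hdvdXn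
    have h2 : aeval θ (X ^ n - 1 : F[X]) = θ ^ n - 1 := by simp
    rw [h2, sub_eq_zero] at h1
    exact h1
  have hθ0 : θ ≠ 0 := by
    intro h0
    have h1 : h ∣ X := by
      rw [← hiff]
      simp [h0]
    have h2 := Polynomial.degree_le_of_dvd h1 Polynomial.X_ne_zero
    rw [Polynomial.degree_X, Polynomial.degree_eq_natDegree hh0, hdeg] at h2
    have : m ≤ 1 := by exact_mod_cast h2
    omega
  have hordθ : orderOf θ = n := by
    have h1 : orderOf θ ∣ n := orderOf_dvd_of_pow_eq_one hθn
    have hfo : IsOfFinOrder θ := isOfFinOrder_iff_pow_eq_one.mpr ⟨n, hn, hθn⟩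
    have h2 : n ≤ orderOf θ := by
      rw [← hord, polyOrder]
      apply Nat.sInf_le
      refine ⟨hfo.orderOf_pos, (hiff _).mp ?_⟩
      simp [pow_orderOf_eq_one θ]
    exact le_antisymm (Nat.le_of_dvd hn h1) h2
  set θu : Lˣ := Units.mk0 θ hθ0 with hθu
  have hordθu : orderOf θu = n := by
    rw [← hordθ, ← orderOf_units]
    rfl
  have hdvdN : n ∣ q ^ m - 1 := by
    have h1 := orderOf_dvd_natCard θu
    rwa [hordθu, Nat.card_eq_fintype_card, Fintype.card_units, hcardL] at h1
  -- the arithmetic equivalences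
  obtain ⟨hns, hbd, eq1, eq2⟩ := arith hq (by omega : 0 < m) hn hdvdN hd hrdef hb hR hs
  refine ⟨eq1, eq2, ?_⟩
  -- equidistance
  intro hsb z hz hz0 w hw hw0
  -- the lift homomorphism φ : A_n → L
  have hev : (X ^ n - 1 : F[X]).eval₂ (algebraMap F L) θ = 0 := by
    simp [hθn]
  set φ : An F n →+* L := AdjoinRoot.lift (algebraMap F L) θ hev with hφ
  have hφmk : ∀ f : F[X], φ (AdjoinRoot.mk (X ^ n - 1 : F[X]) f) = aeval θ f := fun f => by
    rw [hφ, AdjoinRoot.lift_mk, aeval_def]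
  -- g = (X^n-1)/h and its nonvanishing at θ
  set g : F[X] := (X ^ n - 1) / h with hg
  have hgh : g * h = X ^ n - 1 := by
    rw [hg, mul_comm]
    exact EuclideanDomain.mul_div_cancel' hh0 hdvdXn
  have hnF : (n : F) ≠ 0 := by
    intro h0
    have hq0 : (q : F) = 0 := by
      rw [← hcard]
      exact FiniteField.cast_card_eq_zero F
    have h1 : ringChar F ∣ n := (ringChar.spec F n).mp h0
    have h2 : ringChar F ∣ q := (ringChar.spec F q).mp hq0
    have h3 : ringChar F ∣ Nat.gcd n q := Nat.dvd_gcd h1 h2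
    rw [Nat.Coprime] at hco
    rw [hco] at h3
    exact CharP.ringChar_ne_one (Nat.dvd_one.mp h3)
  have hgθ : aeval θ g ≠ 0 := by
    intro hg0
    have hder : aeval θ (derivative (X ^ n - 1 : F[X])) = 0 := by
      rw [← hgh, derivative_mul, map_add, map_mul, map_mul, hg0, hθh, mul_zero, zero_mul,
        add_zero]
    have hder2 : aeval θ (derivative (X ^ n - 1 : F[X])) =
        (algebraMap F L) (n : F) * θ ^ (n - 1) := by
      rw [derivative_sub, derivative_one, derivative_X_pow]
      simp
    rw [hder2] at hder
    rcases mul_eq_zero.mp hder with h1 | h1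
    · exact hnF ((map_eq_zero_iff _ (algebraMap F L).injective).mp h1)
    · exact pow_ne_zero _ hθ0 h1
  -- φ is injective on the code
  have hinj0 : ∀ y ∈ code F n h, φ y = 0 → y = 0 := by
    intro y hy hy0
    rw [code, Ideal.mem_span_singleton'] at hy
    obtain ⟨a, ha⟩ := hy
    obtain ⟨f, rfl⟩ := AdjoinRoot.mk_surjective a
    have hy2 : y = AdjoinRoot.mk (X ^ n - 1 : F[X]) (f * g) := by
      rw [← ha, map_mul]
    rw [hy2, hφmk, map_mul] at hy0
    rcases mul_eq_zero.mp hy0 with h1 | h1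
    · have h2 : h ∣ f := (hiff f).mp h1
      obtain ⟨t, rfl⟩ := h2
      rw [hy2]
      rw [AdjoinRoot.mk_eq_zero]
      exact ⟨t, by rw [← hgh]; ring⟩
    · exact absurd h1 hgθ
  have hinj : ∀ y₁ ∈ code F n h, ∀ y₂ ∈ code F n h, φ y₁ = φ y₂ → y₁ = y₂ := by
    intro y₁ hy₁ y₂ hy₂ he
    have h1 : y₁ - y₂ ∈ code F n h := Ideal.sub_mem _ hy₁ hy₂
    have h2 : φ (y₁ - y₂) = 0 := by rw [map_sub, he, sub_self]
    have h3 := hinj0 _ h1 h2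
    exact sub_eq_zero.mp h3
  -- the images of z and w are nonzero
  have hu0 : φ z ≠ 0 := fun h0 => hz0 (hinj0 z hz h0)
  have hv0 : φ w ≠ 0 := fun h0 => hw0 (hinj0 w hw h0)
  set u : Lˣ := Units.mk0 (φ z) hu0 with hu
  set v : Lˣ := Units.mk0 (φ w) hv0 with hv
  -- a generator of Fˣ and its image in Lˣ
  obtain ⟨g0, hg0⟩ := IsCyclic.exists_generator (α := Fˣ)
  have hg0ord : orderOf g0 = q - 1 := by
    rw [orderOf_eq_card_of_forall_mem_zpowers hg0, Nat.card_units, Nat.card_eq_fintype_card,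
      hcard]
  set emb : Fˣ →* Lˣ := Units.map (algebraMap F L : F →+* L).toMonoidHom with hemb
  have hembinj : Function.Injective emb := Units.map_injective (algebraMap F L).injective
  set g1 : Lˣ := emb g0 with hg1
  have hg1ord : orderOf g1 = q - 1 := by
    rw [hg1, orderOf_injective emb hembinj, hg0ord]
  -- the subgroup generated by θu and g1 is everything
  set H : Subgroup Lˣ := Subgroup.zpowers θu ⊔ Subgroup.zpowers g1 with hH
  have hθuH : θu ∈ H := Subgroup.mem_sup_left (Subgroup.mem_zpowers θu)
  have hg1H : g1 ∈ H := Subgroup.mem_sup_right (Subgroup.mem_zpowers g1)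
  have hcardLx : Nat.card Lˣ = q ^ m - 1 := by
    rw [Nat.card_eq_fintype_card, Fintype.card_units, hcardL]
  have hNdvdH : q ^ m - 1 ∣ Nat.card H := by
    have h1 : n ∣ Nat.card H := hordθu ▸ H.orderOf_dvd_natCard hθuH
    have h2 : (q - 1) ∣ Nat.card H := hg1ord ▸ H.orderOf_dvd_natCard hg1H
    have hlcm : Nat.lcm n (q - 1) = q ^ m - 1 := by
      have hdpos : 0 < d := by
        rw [hd]
        exact Nat.gcd_pos_of_pos_left _ (by omega)
      have hgl : Nat.gcd n (q - 1) * Nat.lcm n (q - 1) = n * (q - 1) := Nat.gcd_mul_lcm _ _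
      have hgd : Nat.gcd n (q - 1) = d := by rw [hd, Nat.gcd_comm]
      have h3 : d * Nat.lcm n (q - 1) = (n * b) * d := by
        have h6 : Nat.gcd n (q - 1) * Nat.lcm n (q - 1) = n * (b * d) := by rw [hgl, hbd]
        rw [hgd] at h6
        rw [h6]; ring
      have h4 : Nat.lcm n (q - 1) * d = (n * b) * d := by rw [← h3]; ring
      have h5 : Nat.lcm n (q - 1) = n * b := Nat.eq_of_mul_eq_mul_right hdpos h4
      rw [h5, ← hsb, hns]
    rw [← hlcm]
    exact Nat.lcm_dvd h1 h2
  have hHtop : H = ⊤ := by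
    apply Subgroup.eq_top_of_card_eq
    rw [hcardLx]
    refine Nat.dvd_antisymm ?_ ?_
    · have := Subgroup.card_subgroup_dvd_card H
      rwa [hcardLx] at this
    · exact hNdvdH
  -- decompose v * u⁻¹
  have hmem : v * u⁻¹ ∈ H := by rw [hHtop]; trivial
  rw [hH, Subgroup.mem_sup] at hmem
  obtain ⟨y, hy, cγ, hcγ, heq⟩ := hmem
  obtain ⟨j, hj⟩ := (Submonoid.mem_powers_iff y θu).mp (mem_powers_iff_mem_zpowers.mpr hy)
  obtain ⟨i, hi⟩ := (Submonoid.mem_powers_iff cγ g1).mp (mem_powers_iff_mem_zpowers.mpr hcγ)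
  set α : F := ((g0 ^ i : Fˣ) : F) with hα
  have hα0 : α ≠ 0 := Units.ne_zero _
  have hveq : (θu ^ j * g1 ^ i) * u = v := by
    rw [hj, hi, heq]
    exact inv_mul_cancel_right v u
  have hLeq : θ ^ j * (algebraMap F L α) * φ z = φ w := by
    have h1 := congrArg (fun t : Lˣ => (t : L)) hveq
    simpa [hα, Units.val_mul, Units.val_pow_eq_pow_val, hu, hv, hθu, hg1, hemb,
      Units.coe_map, map_pow] using h1
  -- the codeword w' = α • x^j z equals w
  set w' : An F n := algebraMap F (An F n) α * (xbar F n ^ j * z) with hw'def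
  have hw' : w' ∈ code F n h := by
    rw [hw'def]
    exact Ideal.mul_mem_left _ _ (Ideal.mul_mem_left _ _ hz)
  have hφalg : φ (algebraMap F (An F n) α) = algebraMap F L α := by
    have h1 : algebraMap F (An F n) α = AdjoinRoot.mk (X ^ n - 1 : F[X]) (C α) := by
      rw [AdjoinRoot.algebraMap_eq]
      rfl
    rw [h1, hφmk, aeval_C]
  have hφxbar : φ (xbar F n) = θ := by
    rw [hφ, xbar]
    exact AdjoinRoot.lift_root hev
  have hφw' : φ w' = φ w := by
    rw [hw'def, map_mul, map_mul, map_pow, hφxbar, hφalg, ← hLeq]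
    ring
  have hww' : w = w' := hinj w hw w' hw' hφw'.symm
  have hwt : wt w' = wt z := by
    have hsm : w' = α • (xbar F n ^ j * z) := by
      rw [hw'def, Algebra.smul_def]
    rw [hsm, wt_smul hn hα0, wt_xbar_pow_mul hn]
  rw [hww', hwt]


end CyclicCode
end
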